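/- In any profile whose antisymmetric margin function on {a,b,c,d} satisfies 0 < m(d,a) < m(b,d) < m(d,c) < m(b,a) < m(a,c) < m(c,b) (ordinal margin graph M_4), the defensible set is exactly {a, d}. -/

import Mathlib

inductive Alt : Type
  | a | b | c | d
deriving DecidableEq

open Alt

section Defensible

variable {α : Type*} (m : α → α → ℤ)

def IsDefensible (x : α) : Prop :=
  ∀ y, ∃ z, m y x ≤ m z y

variable {m}

lemma margin_self_eq_zero (hanti : ∀ x y, m x y = -m y x) (x : α) : m x x = 0 := by
  linarith [hanti x x]

lemma isDefensible_iff_of_antisymm (hanti : ∀ x y, m x y = -m y x) {x : α} :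
    IsDefensible m x ↔ ∀ y, 0 < m y x → ∃ z, m y x ≤ m z y := by
  refine ⟨fun h y _ => h y, fun h y => ?_⟩
  rcases lt_or_ge 0 (m y x) with hpos | hnonpos
  · exact h y hpos
  · exact ⟨y, by rwa [margin_self_eq_zero hanti]⟩

lemma not_isDefensible_of_forall_lt {x y : α} (h : ∀ z, m z y < m y x) : ¬ IsDefensible m x :=
  fun hx => let ⟨z, hz⟩ := hx y; (h z).not_ge hz

end Defensible

structure RealizesM4 (m : Alt → Alt → ℤ) : Prop where
  antisymm : ∀ x y, m x y = -m y x
  da_pos : 0 < m d a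
  da_lt_bd : m d a < m b d
  bd_lt_dc : m b d < m d c
  dc_lt_ba : m d c < m b a
  ba_lt_ac : m b a < m a c
  ac_lt_cb : m a c < m c b

namespace RealizesM4

variable {m : Alt → Alt → ℤ}

lemma isDefensible_a (hm : RealizesM4 m) : IsDefensible m a := by
  rw [isDefensible_iff_of_antisymm hm.antisymm]
  have hc : m c a < 0 := by linarith [hm.antisymm c a, hm.da_pos, hm.da_lt_bd, hm.bd_lt_dc,
    hm.dc_lt_ba, hm.ba_lt_ac]
  rintro (_ | _ | _ | _) hpos
  · exact absurd (margin_self_eq_zero hm.antisymm a) hpos.ne'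
  · exact ⟨c, (hm.ba_lt_ac.trans hm.ac_lt_cb).le⟩
  · exact absurd hpos hc.not_gt
  · exact ⟨b, hm.da_lt_bd.le⟩

lemma isDefensible_d (hm : RealizesM4 m) : IsDefensible m d := by
  rw [isDefensible_iff_of_antisymm hm.antisymm]
  have ha : m a d < 0 := by linarith [hm.antisymm a d, hm.da_pos]
  have hc : m c d < 0 := by linarith [hm.antisymm c d, hm.da_pos, hm.da_lt_bd, hm.bd_lt_dc]
  rintro (_ | _ | _ | _) hpos
  · exact absurd hpos ha.not_gt
  · exact ⟨c, by linarith [hm.bd_lt_dc, hm.dc_lt_ba, hm.ba_lt_ac, hm.ac_lt_cb]⟩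
  · exact absurd hpos hc.not_gt
  · exact absurd (margin_self_eq_zero hm.antisymm d) hpos.ne'

/-- `c` attacks `b` with the largest margin of all, so nothing answers it. -/
lemma not_isDefensible_b (hm : RealizesM4 m) : ¬ IsDefensible m b := by
  refine not_isDefensible_of_forall_lt (y := c) fun z => ?_
  cases z <;> linarith [hm.antisymm b c, hm.antisymm c c, hm.da_pos, hm.da_lt_bd, hm.bd_lt_dc,
    hm.dc_lt_ba, hm.ba_lt_ac, hm.ac_lt_cb]

/-- `a` attacks `c` more strongly than anything attacks `a`. -/
lemma not_isDefensible_c (hm : RealizesM4 m) : ¬ IsDefensible m c := by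
  refine not_isDefensible_of_forall_lt (y := a) fun z => ?_
  cases z <;> linarith [hm.antisymm a a, hm.antisymm c a, hm.da_pos, hm.da_lt_bd, hm.bd_lt_dc,
    hm.dc_lt_ba, hm.ba_lt_ac]

end RealizesM4

/-- For any antisymmetric margin function realizing M_4, the
defensible set is exactly {a, d}. -/
theorem defensible_M4 (m : Alt → Alt → ℤ) (hanti : ∀ x y, m x y = - m y x)
    (h1 : 0 < m d a) (h2 : m d a < m b d) (h3 : m b d < m d c)
    (h4 : m d c < m b a) (h5 : m b a < m a c) (h6 : m a c < m c b) :
    {x : Alt | ∀ y : Alt, ∃ z : Alt, m y x ≤ m z y} = {a, d} := by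
  have hm : RealizesM4 m := ⟨hanti, h1, h2, h3, h4, h5, h6⟩
  ext x
  change IsDefensible m x ↔ x ∈ ({a, d} : Set Alt)
  cases x
  · exact iff_of_true hm.isDefensible_a (by simp)
  · exact iff_of_false hm.not_isDefensible_b (by simp)
  · exact iff_of_false hm.not_isDefensible_c (by simp)
  · exact iff_of_true hm.isDefensible_d (by simp)
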